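/- arXiv:2203.03108 — 5 statements merged into one kernel-verified Lean document; each statement's English description precedes it below -/
import Mathlib

section
/- Assume 2·v^min > v^max > v₀ > v^min and that the optimization problem P1 is feasible. Then for any optimizer (α*, β*, v*) of P1, the voltages (v₁*, …, v_N*) satisfy the load-flow equations and the strict security constraints. -/
open Filter Topology Finset

/-- The strict security constraints: `vmin < v n < vmax` for every PQ bus `n ∈ {1,…,N}`,
and `|g n k * (v n - v k)| < imax n k` for every PQ bus `n` and every neighbour `k ∈ K n`. -/
def SecurityStrict (N : ℕ) (K : ℕ → Finset ℕ) (g : ℕ → ℕ → ℝ)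
    (vmin vmax : ℝ) (imax : ℕ → ℕ → ℝ) (v : ℕ → ℝ) : Prop :=
  (∀ n ∈ Finset.Icc 1 N, vmin < v n ∧ v n < vmax) ∧
  (∀ n ∈ Finset.Icc 1 N, ∀ k ∈ K n, |g n k * (v n - v k)| < imax n k)

/-- The load-flow equations at the PQ buses `n ∈ {1,…,N}`. -/
def LoadFlow (N : ℕ) (K : ℕ → Finset ℕ) (g : ℕ → ℕ → ℝ) (p : ℕ → ℝ)
    (v : ℕ → ℝ) : Prop :=
  ∀ n ∈ Finset.Icc 1 N,
    (∑ k ∈ K n, g n k) * (v n) ^ 2 - (∑ k ∈ K n, g n k * v k) * v n = p n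

/-- Feasibility of a point `(α, β, v)` for the convex optimization `P1`. -/
def P1Feasible (N : ℕ) (K : ℕ → Finset ℕ) (g : ℕ → ℕ → ℝ) (v₀ vmin vmax : ℝ)
    (imax : ℕ → ℕ → ℝ) (p : ℕ → ℝ)
    (α : ℕ → ℝ) (β : ℕ → ℕ → ℝ) (v : ℕ → ℝ) : Prop :=
  v 0 = v₀ ∧
  SecurityStrict N K g vmin vmax imax v ∧
  (∀ n ∈ Finset.Icc 1 N,
    (∑ k ∈ K n, g n k) * α n - ∑ k ∈ (K n).erase 0, g n k * β n k
      = p n + (if 0 ∈ K n then g n 0 * v₀ else 0) * v n) ∧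
  (∀ n ∈ Finset.Icc 1 N, (v n) ^ 2 ≤ α n) ∧
  (∀ n ∈ Finset.Icc 1 N, ∀ k ∈ (K n).erase 0, 0 ≤ β n k ∧ (β n k) ^ 2 ≤ α n * α k)

private lemma ev_lt {f : ℝ → ℝ} (hf : Continuous f) {c : ℝ} (h : f 0 < c) :
    ∀ᶠ ε in 𝓝[>] (0:ℝ), f ε < c :=
  ((hf.tendsto 0).mono_left nhdsWithin_le_nhds).eventually_lt_const h

private lemma security_ev (N : ℕ) (K : ℕ → Finset ℕ) (g : ℕ → ℕ → ℝ)
    (vmin vmax : ℝ) (imax : ℕ → ℕ → ℝ) (v : ℕ → ℝ) (m : ℕ)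
    (hm : m ∈ Finset.Icc 1 N)
    (hsec : SecurityStrict N K g vmin vmax imax v) :
    ∀ᶠ ε in 𝓝[>] (0:ℝ),
      SecurityStrict N K g vmin vmax imax (fun n => v n + if n = m then ε else 0) := by
  obtain ⟨hv, hi⟩ := hsec
  have h1 : ∀ᶠ ε in 𝓝[>] (0:ℝ), ∀ n ∈ Finset.Icc 1 N,
      vmin < v n + (if n = m then ε else 0) ∧ v n + (if n = m then ε else 0) < vmax := by
    rw [eventually_all_finset]
    intro n hn
    have hcont : Continuous fun ε : ℝ => v n + (if n = m then ε else 0) := by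
      by_cases h : n = m <;> simp [h] <;> continuity
    have h2 := ev_lt hcont (by simpa using (hv n hn).2)
    filter_upwards [h2, eventually_mem_nhdsWithin] with ε hε hε0
    have hε0' : (0:ℝ) < ε := hε0
    have := (hv n hn).1
    refine ⟨?_, hε⟩
    split_ifs <;> linarith
  have h2 : ∀ᶠ ε in 𝓝[>] (0:ℝ), ∀ n ∈ Finset.Icc 1 N, ∀ k ∈ K n,
      |g n k * ((v n + (if n = m then ε else 0)) - (v k + (if k = m then ε else 0)))|
        < imax n k := by
    rw [eventually_all_finset]
    intro n hn
    rw [eventually_all_finset]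
    intro k hk
    have hcont : Continuous fun ε : ℝ =>
        |g n k * ((v n + (if n = m then ε else 0)) - (v k + (if k = m then ε else 0)))| := by
      by_cases h : n = m <;> by_cases h' : k = m <;> simp [h, h'] <;> continuity
    exact ev_lt hcont (by simpa using hi n hn k hk)
  filter_upwards [h1, h2] with ε hε1 hε2
  exact ⟨hε1, hε2⟩

set_option maxHeartbeats 1600000 in
/-- **Theorem 1 (existence).** Assume `2 vmin > vmax > v₀ > vmin` and that `P1` is feasible.
Then for any optimizer `(α⋆, β⋆, v⋆)` of `P1`, the voltages `(v⋆ 1, …, v⋆ N)` satisfy the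
load-flow equations and the strict security constraints. -/
theorem P1_optimizer_solves_load_flow
    (N : ℕ) (hN : 1 ≤ N)
    (K : ℕ → Finset ℕ)
    (hKsub : ∀ n, n ≤ N → ∀ k ∈ K n, k ≤ N ∧ k ≠ n)
    (hKsymm : ∀ n, n ≤ N → ∀ k, k ≤ N → (k ∈ K n ↔ n ∈ K k))
    (g : ℕ → ℕ → ℝ)
    (hg : ∀ n k, k ∈ K n → 0 < g n k)
    (hgsymm : ∀ n k, g n k = g k n)
    (v₀ vmin vmax : ℝ) (hv₀ : 0 < v₀) (hvmin : 0 < vmin) (hvmax : 0 < vmax)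
    (imax : ℕ → ℕ → ℝ)
    (himax : ∀ n ∈ Finset.Icc 1 N, ∀ k ∈ K n, 0 < imax n k)
    (p : ℕ → ℝ)
    -- the ordering assumption `2 vmin > vmax > v₀ > vmin`
    (hord₁ : vmax < 2 * vmin) (hord₂ : v₀ < vmax) (hord₃ : vmin < v₀)
    -- `P1` is feasible
    (hfeas : ∃ α β v, P1Feasible N K g v₀ vmin vmax imax p α β v)
    -- `(α⋆, β⋆, v⋆)` is an optimizer of `P1`
    (α : ℕ → ℝ) (β : ℕ → ℕ → ℝ) (v : ℕ → ℝ)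
    (hopt_feas : P1Feasible N K g v₀ vmin vmax imax p α β v)
    (hopt_max : ∀ α' β' v', P1Feasible N K g v₀ vmin vmax imax p α' β' v' →
      ∑ n ∈ Finset.Icc 1 N, v' n ≤ ∑ n ∈ Finset.Icc 1 N, v n) :
    LoadFlow N K g p v ∧ SecurityStrict N K g vmin vmax imax v := by
  obtain ⟨hv0, hsec, heq, hα, hβ⟩ := hopt_feas
  have hvpos : ∀ n ∈ Finset.Icc 1 N, 0 < v n := fun n hn => hvmin.trans (hsec.1 n hn).1
  have hαnn : ∀ n ∈ Finset.Icc 1 N, 0 ≤ α n := fun n hn => (sq_nonneg _).trans (hα n hn)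
  have hkIcc : ∀ n ∈ Finset.Icc 1 N, ∀ k ∈ (K n).erase 0, k ∈ Finset.Icc 1 N := by
    intro n hn k hk
    have hkn := Finset.mem_of_mem_erase hk
    have h := hKsub n (Finset.mem_Icc.mp hn).2 k hkn
    have hk0 : k ≠ 0 := Finset.ne_of_mem_erase hk
    rw [Finset.mem_Icc]
    exact ⟨Nat.one_le_iff_ne_zero.mpr hk0, h.1⟩
  have hsum_eps : ∀ m ∈ Finset.Icc 1 N, ∀ ε : ℝ,
      ∑ n ∈ Finset.Icc 1 N, (v n + if n = m then ε else 0)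
        = (∑ n ∈ Finset.Icc 1 N, v n) + ε := by
    intro m hm ε
    rw [Finset.sum_add_distrib, Finset.sum_ite_eq' (Finset.Icc 1 N) m (fun _ => ε), if_pos hm]
  -- Step 1 : at the optimum, `α n = v n ^ 2` for every PQ bus.
  have hαeq : ∀ m ∈ Finset.Icc 1 N, α m = v m ^ 2 := by
    intro m hm
    by_contra hne
    have hlt : v m ^ 2 < α m := lt_of_le_of_ne (hα m hm) (fun h => hne h.symm)
    have heqm := heq m hm
    set S : ℝ := ∑ k ∈ K m, g m k with hS
    set C : ℝ := if 0 ∈ K m then g m 0 * v₀ else 0 with hC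
    have hSδ : ∀ ε : ℝ, S * (C * ε / S) = C * ε := by
      intro ε
      by_cases h0 : 0 ∈ K m
      · have hS0 : 0 < S := Finset.sum_pos (fun k hk => hg m k hk) ⟨0, h0⟩
        field_simp
      · rw [hC, if_neg h0]; simp
    have hδnn : ∀ ε : ℝ, 0 ≤ ε → 0 ≤ C * ε / S := by
      intro ε hε
      by_cases h0 : 0 ∈ K m
      · have hS0 : 0 < S := Finset.sum_pos (fun k hk => hg m k hk) ⟨0, h0⟩
        have hC0 : 0 ≤ C := by rw [hC, if_pos h0]; exact (mul_pos (hg m 0 h0) hv₀).le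
        positivity
      · rw [hC, if_neg h0]; simp
    have hEs := security_ev N K g vmin vmax imax v m hm hsec
    have hE3 : ∀ᶠ ε in 𝓝[>] (0:ℝ), (v m + ε) ^ 2 < α m :=
      ev_lt ((continuous_const.add continuous_id).pow 2) (by simpa using hlt)
    have hkey : ∀ᶠ ε in 𝓝[>] (0:ℝ), P1Feasible N K g v₀ vmin vmax imax p
        (fun n => α n + if n = m then C * ε / S else 0) β
        (fun n => v n + if n = m then ε else 0) := by
      filter_upwards [hEs, hE3, eventually_mem_nhdsWithin] with ε hsε h3ε hε0
      have hε0' : (0:ℝ) < ε := hε0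
      have hm0 : m ≠ 0 := by have := (Finset.mem_Icc.mp hm).1; omega
      have hnn : ∀ j, (0:ℝ) ≤ if j = m then C * ε / S else 0 := by
        intro j; split_ifs
        · exact hδnn ε hε0'.le
        · exact le_rfl
      refine ⟨?_, hsε, ?_, ?_, ?_⟩
      · beta_reduce
        rw [if_neg (Ne.symm hm0), add_zero]
        exact hv0
      · intro n hn
        beta_reduce
        by_cases hnm : n = m
        · subst hnm
          rw [if_pos rfl, if_pos rfl, ← hS, ← hC, mul_add, hSδ ε]
          linarith [heqm]
        · rw [if_neg hnm, if_neg hnm, add_zero, add_zero]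
          exact heq n hn
      · intro n hn
        beta_reduce
        by_cases hnm : n = m
        · subst hnm
          rw [if_pos rfl, if_pos rfl]
          linarith [hδnn ε hε0'.le, h3ε]
        · rw [if_neg hnm, if_neg hnm, add_zero, add_zero]
          exact hα n hn
      · intro n hn k hk
        beta_reduce
        refine ⟨(hβ n hn k hk).1, ?_⟩
        have hkI := hkIcc n hn k hk
        calc (β n k) ^ 2 ≤ α n * α k := (hβ n hn k hk).2
          _ ≤ (α n + if n = m then C * ε / S else 0) * (α k + if k = m then C * ε / S else 0) :=
            mul_le_mul (le_add_of_nonneg_right (hnn n)) (le_add_of_nonneg_right (hnn k))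
              (hαnn k hkI) (by linarith [hαnn n hn, hnn n])
    obtain ⟨ε, hfeas', hε0⟩ := (hkey.and eventually_mem_nhdsWithin).exists
    have hε0' : (0:ℝ) < ε := hε0
    have hle := hopt_max _ _ _ hfeas'
    rw [hsum_eps m hm ε] at hle
    linarith
  -- Step 2 : at the optimum, `β n k = v n * v k` for neighbours `k ≠ 0`.
  have hβeq : ∀ m ∈ Finset.Icc 1 N, ∀ k₀ ∈ (K m).erase 0, β m k₀ = v m * v k₀ := by
    intro m hm k₀ hk₀
    have hk₀K : k₀ ∈ K m := Finset.mem_of_mem_erase hk₀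
    have hk₀I : k₀ ∈ Finset.Icc 1 N := hkIcc m hm k₀ hk₀
    have hgk : 0 < g m k₀ := hg m k₀ hk₀K
    have hbnn := (hβ m hm k₀ hk₀).1
    have hvm := hvpos m hm
    have hvk := hvpos k₀ hk₀I
    have hble : β m k₀ ≤ v m * v k₀ := by
      have hb2 := (hβ m hm k₀ hk₀).2
      rw [hαeq m hm, hαeq k₀ hk₀I] at hb2
      have hb2' : β m k₀ ^ 2 ≤ (v m * v k₀) ^ 2 := by rw [mul_pow]; exact hb2
      exact (pow_le_pow_iff_left₀ hbnn (mul_pos hvm hvk).le two_ne_zero).mp hb2'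
    by_contra hne
    have hblt : β m k₀ < v m * v k₀ := lt_of_le_of_ne hble hne
    have heqm := heq m hm
    rw [hαeq m hm] at heqm
    set S : ℝ := ∑ k ∈ K m, g m k with hS
    set C : ℝ := if 0 ∈ K m then g m 0 * v₀ else 0 with hC
    set Δ : ℝ → ℝ := fun ε => (S * (2 * v m * ε + ε ^ 2) - C * ε) / g m k₀ with hΔ
    have hSnn : 0 ≤ S := Finset.sum_nonneg fun k hk => (hg m k hk).le
    have hvmin' : vmin < v m := (hsec.1 m hm).1
    have h2vm : v₀ ≤ 2 * v m := by linarith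
    have hΔnn : ∀ ε : ℝ, 0 ≤ ε → 0 ≤ Δ ε := by
      intro ε hε
      apply div_nonneg _ hgk.le
      have h1 : 0 ≤ 2 * v m * ε + ε ^ 2 := by
        nlinarith [sq_nonneg ε, mul_nonneg (mul_nonneg (by norm_num : (0:ℝ) ≤ 2) hvm.le) hε]
      by_cases h0 : 0 ∈ K m
      · have hg0 := hg m 0 h0
        have hgS : g m 0 ≤ S := Finset.single_le_sum (fun k hk => (hg m k hk).le) h0
        rw [hC, if_pos h0]
        have h2 : g m 0 * (2 * v m * ε + ε ^ 2) ≤ S * (2 * v m * ε + ε ^ 2) :=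
          mul_le_mul_of_nonneg_right hgS h1
        nlinarith [mul_nonneg (mul_nonneg hg0.le hε) (sub_nonneg.mpr h2vm),
          mul_nonneg hg0.le (sq_nonneg ε)]
      · rw [hC, if_neg h0]
        nlinarith [mul_nonneg hSnn h1]
    have hgΔ : ∀ ε : ℝ, g m k₀ * Δ ε = S * (2 * v m * ε + ε ^ 2) - C * ε := by
      intro ε; rw [hΔ]; field_simp
    have hEs := security_ev N K g vmin vmax imax v m hm hsec
    have hΔ0 : Δ 0 = 0 := by rw [hΔ]; norm_num
    have hE4 : ∀ᶠ ε in 𝓝[>] (0:ℝ), β m k₀ + Δ ε < v m * v k₀ := by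
      apply ev_lt
      · rw [hΔ]
        exact continuous_const.add (Continuous.div_const
          (((continuous_const.mul ((continuous_const.mul continuous_id).add
            (continuous_id.pow 2))).sub (continuous_const.mul continuous_id))) _)
      · rw [hΔ0, add_zero]; exact hblt
    have hkey : ∀ᶠ ε in 𝓝[>] (0:ℝ), P1Feasible N K g v₀ vmin vmax imax p
        (fun n => if n = m then (v m + ε) ^ 2 else α n)
        (fun n k => β n k + if n = m then (if k = k₀ then Δ ε else 0) else 0)
        (fun n => v n + if n = m then ε else 0) := by
      filter_upwards [hEs, hE4, eventually_mem_nhdsWithin] with ε hsε h4ε hε0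
      have hε0' : (0:ℝ) < ε := hε0
      have hm0 : m ≠ 0 := by have := (Finset.mem_Icc.mp hm).1; omega
      refine ⟨?_, hsε, ?_, ?_, ?_⟩
      · beta_reduce
        rw [if_neg (Ne.symm hm0), add_zero]
        exact hv0
      · intro n hn
        beta_reduce
        by_cases hnm : n = m
        · subst hnm
          have hterm : ∀ k' ∈ (K n).erase 0,
              g n k' * (β n k' + if n = n then (if k' = k₀ then Δ ε else 0) else 0)
                = g n k' * β n k' + (if k' = k₀ then g n k' * Δ ε else 0) := by
            intro k' _
            rw [if_pos rfl]
            split_ifs <;> ring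
          rw [Finset.sum_congr rfl hterm, Finset.sum_add_distrib,
            Finset.sum_ite_eq' ((K n).erase 0) k₀ (fun k' => g n k' * Δ ε), if_pos hk₀,
            if_pos rfl, if_pos rfl, ← hS, ← hC]
          have hx : (v n + ε) ^ 2 = v n ^ 2 + (2 * v n * ε + ε ^ 2) := by ring
          rw [hx, mul_add]
          linarith [heqm, hgΔ ε]
        · have hterm : ∀ k' ∈ (K n).erase 0,
              g n k' * (β n k' + if n = m then (if k' = k₀ then Δ ε else 0) else 0)
                = g n k' * β n k' := by
            intro k' _
            rw [if_neg hnm, add_zero]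
          rw [Finset.sum_congr rfl hterm, if_neg hnm, if_neg hnm, add_zero]
          exact heq n hn
      · intro n hn
        beta_reduce
        by_cases hnm : n = m
        · subst hnm
          rw [if_pos rfl, if_pos rfl]
        · rw [if_neg hnm, if_neg hnm, add_zero]
          exact hα n hn
      · intro n hn k hk
        beta_reduce
        have h0 : (0:ℝ) ≤ (if n = m then (if k = k₀ then Δ ε else 0) else 0) := by
          split_ifs
          · exact hΔnn ε hε0'.le
          · exact le_rfl
          · exact le_rfl
        refine ⟨by linarith [(hβ n hn k hk).1], ?_⟩
        have hkI := hkIcc n hn k hk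
        have hαknn := hαnn k hkI
        have hv2le : v m ^ 2 ≤ (v m + ε) ^ 2 := by nlinarith
        by_cases h1 : n = m
        · have hknm : k ≠ m := by
            subst h1
            exact (hKsub n (Finset.mem_Icc.mp hn).2 k (Finset.mem_of_mem_erase hk)).2
          by_cases h2 : k = k₀
          · rw [if_pos h1, if_pos h2, if_pos h1, if_neg hknm]
            subst h1; subst h2
            rw [hαeq k hkI]
            have hnn2 : 0 ≤ β n k + Δ ε := add_nonneg (hβ n hn k hk).1 (hΔnn ε hε0'.le)
            have hle2 : β n k + Δ ε ≤ (v n + ε) * v k := by nlinarith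
            calc (β n k + Δ ε) ^ 2 ≤ ((v n + ε) * v k) ^ 2 := by
                  exact pow_le_pow_left₀ hnn2 hle2 2
              _ = (v n + ε) ^ 2 * v k ^ 2 := by ring
          · rw [if_pos h1, if_neg h2, add_zero, if_pos h1, if_neg hknm]
            have hb := (hβ n hn k hk).2
            rw [hαeq n hn] at hb
            have hv2le' : v n ^ 2 ≤ (v m + ε) ^ 2 := by rw [h1]; exact hv2le
            have := mul_le_mul_of_nonneg_right hv2le' hαknn
            linarith
        · rw [if_neg h1, add_zero, if_neg h1]
          by_cases h3 : k = m
          · rw [if_pos h3]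
            have hb := (hβ n hn k hk).2
            rw [hαeq k hkI] at hb
            have hv2le' : v k ^ 2 ≤ (v m + ε) ^ 2 := by rw [h3]; exact hv2le
            have := mul_le_mul_of_nonneg_left hv2le' (hαnn n hn)
            linarith
          · rw [if_neg h3]
            exact (hβ n hn k hk).2
    obtain ⟨ε, hfeas', hε0⟩ := (hkey.and eventually_mem_nhdsWithin).exists
    have hε0' : (0:ℝ) < ε := hε0
    have hle := hopt_max _ _ _ hfeas'
    rw [hsum_eps m hm ε] at hle
    linarith
  -- Step 3 : conclude the load-flow equations.
  refine ⟨?_, hsec⟩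
  intro n hn
  have h := heq n hn
  rw [hαeq n hn] at h
  have hsum : (∑ k ∈ K n, g n k * v k) * v n
      = (if 0 ∈ K n then g n 0 * v₀ else 0) * v n + ∑ k ∈ (K n).erase 0, g n k * β n k := by
    by_cases h0 : 0 ∈ K n
    · have hsplit : ∑ k ∈ K n, g n k * v k
          = g n 0 * v 0 + ∑ k ∈ (K n).erase 0, g n k * v k :=
        (Finset.add_sum_erase _ _ h0).symm
      rw [hsplit, hv0, add_mul, if_pos h0, Finset.sum_mul]
      congr 1
      exact Finset.sum_congr rfl fun k hk => by rw [hβeq n hn k hk]; ring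
    · rw [if_neg h0, zero_mul, zero_add, Finset.erase_eq_of_notMem h0, Finset.sum_mul]
      refine Finset.sum_congr rfl fun k hk => ?_
      have hk' : k ∈ (K n).erase 0 := by
        rw [Finset.erase_eq_of_notMem h0]; exact hk
      rw [hβeq n hn k hk']; ring
  rw [hsum]
  linarith [h]
end

section
/- If the optimization problem P2 is infeasible, then there exists at most one voltage vector (v₁, …, v_N) that satisfies the load-flow equations together with the strict security constraints. -/
/-- Feasibility of the polynomial optimization `P2`. -/
def P2Feasible (N : ℕ) (K : ℕ → Finset ℕ) (g : ℕ → ℕ → ℝ) (v₀ vmin vmax : ℝ)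
    (imax : ℕ → ℕ → ℝ) : Prop :=
  ∃ v γ : ℕ → ℝ, v 0 = v₀ ∧
    (∀ n ∈ Finset.Icc 1 N, vmin ≤ v n ∧ v n ≤ vmax) ∧
    (∀ n ∈ Finset.Icc 1 N, ∀ k ∈ K n, |g n k * (v n - v k)| ≤ imax n k) ∧
    (∑ n ∈ Finset.Icc 1 N, (γ n) ^ 2 = 1) ∧
    (∀ n ∈ Finset.Icc 1 N,
      (2 * (∑ k ∈ K n, g n k) * v n - ∑ k ∈ K n, g n k * v k) * γ n
        = ∑ k ∈ (K n).erase 0, g n k * v n * γ k)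

/-- **Theorem 2 (uniqueness).** If the polynomial optimization `P2` is infeasible, then there
exists at most one voltage vector `(v 1, …, v N)` satisfying the load-flow equations together
with the strict security constraints. -/
theorem P2_infeasible_implies_uniqueness
    (N : ℕ) (hN : 1 ≤ N)
    (K : ℕ → Finset ℕ)
    (hKsub : ∀ n, n ≤ N → ∀ k ∈ K n, k ≤ N ∧ k ≠ n)
    (hKsymm : ∀ n, n ≤ N → ∀ k, k ≤ N → (k ∈ K n ↔ n ∈ K k))
    (g : ℕ → ℕ → ℝ)
    (hg : ∀ n k, k ∈ K n → 0 < g n k)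
    (hgsymm : ∀ n k, g n k = g k n)
    (v₀ vmin vmax : ℝ) (hv₀ : 0 < v₀) (hvmin : 0 < vmin) (hvmax : 0 < vmax)
    (imax : ℕ → ℕ → ℝ)
    (himax : ∀ n ∈ Finset.Icc 1 N, ∀ k ∈ K n, 0 < imax n k)
    (p : ℕ → ℝ)
    -- `P2` is infeasible
    (hP2 : ¬ P2Feasible N K g v₀ vmin vmax imax) :
    ∀ v w : ℕ → ℝ, v 0 = v₀ → w 0 = v₀ →
      LoadFlow N K g p v → SecurityStrict N K g vmin vmax imax v →
      LoadFlow N K g p w → SecurityStrict N K g vmin vmax imax w →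
      ∀ n ∈ Finset.Icc 1 N, v n = w n := by
  intro v w hv0 hw0 hlfv hsecv hlfw hsecw n0 hn0
  by_contra hne
  apply hP2
  -- the squared norm of the difference on buses 1..N
  set s : ℝ := ∑ n ∈ Finset.Icc 1 N, (v n - w n) ^ 2 with hs_def
  have hs : 0 < s := by
    apply Finset.sum_pos' (fun i _ => sq_nonneg _)
    refine ⟨n0, hn0, ?_⟩
    have h := sub_ne_zero.mpr hne
    positivity
  set c : ℝ := Real.sqrt s with hc_def
  have hc : 0 < c := Real.sqrt_pos.mpr hs
  have hc2 : c ^ 2 = s := Real.sq_sqrt hs.le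
  refine ⟨fun k => (v k + w k) / 2, fun k => (v k - w k) / c, ?_, ?_, ?_, ?_, ?_⟩
  · show (v 0 + w 0) / 2 = v₀
    rw [hv0, hw0]; ring
  · intro n hn
    have h1 := (hsecv.1 n hn); have h2 := (hsecw.1 n hn)
    exact ⟨by linarith [h1.1, h2.1], by linarith [h1.2, h2.2]⟩
  · intro n hn k hk
    have h1 := hsecv.2 n hn k hk
    have h2 := hsecw.2 n hn k hk
    have key : g n k * ((v n + w n) / 2 - (v k + w k) / 2)
        = (g n k * (v n - v k) + g n k * (w n - w k)) / 2 := by ring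
    rw [key, abs_div, abs_two]
    have := abs_add_le (g n k * (v n - v k)) (g n k * (w n - w k))
    linarith
  · simp only [div_pow]
    rw [← Finset.sum_div, hc2, div_self hs.ne']
  · intro n hn
    -- load flow at v and w
    have hv := hlfv n hn
    have hw := hlfw n hn
    have hδ0 : v 0 - w 0 = 0 := by rw [hv0, hw0, sub_self]
    -- key Jacobian identity at the midpoint
    have key : (2 * (∑ k ∈ K n, g n k) * ((v n + w n) / 2)
          - ∑ k ∈ K n, g n k * ((v k + w k) / 2)) * (v n - w n)
        = ∑ k ∈ (K n).erase 0, g n k * ((v n + w n) / 2) * (v k - w k) := by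
      have herase : ∑ k ∈ (K n).erase 0, g n k * ((v n + w n) / 2) * (v k - w k)
          = ∑ k ∈ K n, g n k * ((v n + w n) / 2) * (v k - w k) := by
        rcases Finset.decidableMem 0 (K n) with h0 | h0
        · rw [Finset.erase_eq_of_notMem h0]
        · exact Finset.sum_erase _ (by rw [hδ0]; ring)
      rw [herase]
      have e1 : ∑ k ∈ K n, g n k * ((v k + w k) / 2)
          = ((∑ k ∈ K n, g n k * v k) + (∑ k ∈ K n, g n k * w k)) / 2 := by
        rw [← Finset.sum_add_distrib, Finset.sum_div]
        exact Finset.sum_congr rfl fun k _ => by ring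
      have e2 : ∑ k ∈ K n, g n k * ((v n + w n) / 2) * (v k - w k)
          = ((v n + w n) / 2) * ((∑ k ∈ K n, g n k * v k) - (∑ k ∈ K n, g n k * w k)) := by
        rw [← Finset.sum_sub_distrib, Finset.mul_sum]
        exact Finset.sum_congr rfl fun k _ => by ring
      rw [e1, e2]
      linear_combination hv - hw
    have e3 : ∑ k ∈ (K n).erase 0, g n k * ((v n + w n) / 2) * ((v k - w k) / c)
        = (∑ k ∈ (K n).erase 0, g n k * ((v n + w n) / 2) * (v k - w k)) / c := by
      rw [Finset.sum_div]
      exact Finset.sum_congr rfl fun k _ => by ring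
    beta_reduce
    rw [e3, ← key]
    ring
end

section
/- Assume 2·v^min > v^max > v₀ > v^min. Then every optimizer (α*, β*, v*) of P1 satisfies (v_n*)² = α_n* for all n ∈ {1, …, N}. -/
/-- Assume `2 vmin > vmax > v₀ > vmin`. Then every optimizer `(α⋆, β⋆, v⋆)` of `P1`
satisfies `(v⋆ n)² = α⋆ n` for all `n ∈ {1,…,N}`. -/
theorem P1_optimizer_alpha_tight
    (N : ℕ) (hN : 1 ≤ N)
    (K : ℕ → Finset ℕ)
    (hKsub : ∀ n, n ≤ N → ∀ k ∈ K n, k ≤ N ∧ k ≠ n)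
    (hKsymm : ∀ n, n ≤ N → ∀ k, k ≤ N → (k ∈ K n ↔ n ∈ K k))
    (g : ℕ → ℕ → ℝ)
    (hg : ∀ n k, k ∈ K n → 0 < g n k)
    (hgsymm : ∀ n k, g n k = g k n)
    (v₀ vmin vmax : ℝ) (hv₀ : 0 < v₀) (hvmin : 0 < vmin) (hvmax : 0 < vmax)
    (imax : ℕ → ℕ → ℝ)
    (himax : ∀ n ∈ Finset.Icc 1 N, ∀ k ∈ K n, 0 < imax n k)
    (p : ℕ → ℝ)
    (hord₁ : vmax < 2 * vmin) (hord₂ : v₀ < vmax) (hord₃ : vmin < v₀)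
    -- `(α⋆, β⋆, v⋆)` is an optimizer of `P1`
    (α : ℕ → ℝ) (β : ℕ → ℕ → ℝ) (v : ℕ → ℝ)
    (hopt_feas : P1Feasible N K g v₀ vmin vmax imax p α β v)
    (hopt_max : ∀ α' β' v', P1Feasible N K g v₀ vmin vmax imax p α' β' v' →
      ∑ n ∈ Finset.Icc 1 N, v' n ≤ ∑ n ∈ Finset.Icc 1 N, v n) :
    ∀ n ∈ Finset.Icc 1 N, (v n) ^ 2 = α n := by
  intro m hm
  by_contra hne
  obtain ⟨hv0, hsec, hbal, hvα, hβ⟩ := hopt_feas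
  have hlt : (v m) ^ 2 < α m := lt_of_le_of_ne (hvα m hm) hne
  obtain ⟨hm1, hmN⟩ := Finset.mem_Icc.mp hm
  have hm0 : m ≠ 0 := by omega
  have hvm_pos : 0 < v m := lt_trans hvmin (hsec.1 m hm).1
  -- total conductance at m
  set S := ∑ k ∈ K m, g m k with hS
  have hS_nonneg : 0 ≤ S := Finset.sum_nonneg fun k hk => (hg m k hk).le
  have hS_pos : 0 ∈ K m → 0 < S := fun h0 =>
    Finset.sum_pos' (fun k hk => (hg m k hk).le) ⟨0, h0, hg m 0 h0⟩
  -- slack for line constraints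
  set Q : Finset (ℕ × ℕ) :=
    ((Finset.Icc 1 N) ×ˢ (Finset.range (N + 1))).filter (fun q => q.2 ∈ K q.1) with hQ
  set f : ℕ × ℕ → ℝ :=
    fun q => (imax q.1 q.2 - |g q.1 q.2 * (v q.1 - v q.2)|) / (4 * g q.1 q.2) with hf
  have hfpos : ∀ q ∈ Q, 0 < f q := by
    intro q hq
    rw [hQ, Finset.mem_filter] at hq
    obtain ⟨hq1, hqK⟩ := hq
    rw [Finset.mem_product] at hq1
    have hsl := hsec.2 q.1 hq1.1 q.2 hqK
    have hgq := hg q.1 q.2 hqK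
    exact div_pos (by linarith) (by linarith)
  set εl : ℝ := if h : Q.Nonempty then Q.inf' h f else 1 with hεl
  have hεl_pos : 0 < εl := by
    rw [hεl]
    split
    · next h => exact (Finset.lt_inf'_iff h).mpr fun b hb => hfpos b hb
    · norm_num
  have hεl_le : ∀ q ∈ Q, εl ≤ f q := by
    intro q hq
    rw [hεl, dif_pos ⟨q, hq⟩]
    exact Finset.inf'_le f hq
  -- the perturbation size
  set ε := min (min 1 ((vmax - v m) / 2))
      (min ((α m - (v m) ^ 2) / (2 * v m + 1)) εl) with hε
  have hvmax' : v m < vmax := (hsec.1 m hm).2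
  have hε_pos : 0 < ε := by
    have h1 : (0:ℝ) < (vmax - v m) / 2 := by linarith
    have h2 : 0 < (α m - (v m) ^ 2) / (2 * v m + 1) := div_pos (by linarith) (by linarith)
    simp only [hε, lt_min_iff]
    exact ⟨⟨one_pos, h1⟩, h2, hεl_pos⟩
  have hε1 : ε ≤ 1 := le_trans (min_le_left _ _) (min_le_left _ _)
  have hεmax : ε ≤ (vmax - v m) / 2 := le_trans (min_le_left _ _) (min_le_right _ _)
  have hεα : ε ≤ (α m - (v m) ^ 2) / (2 * v m + 1) :=
    le_trans (min_le_right _ _) (min_le_left _ _)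
  have hεline : ∀ n ∈ Finset.Icc 1 N, ∀ k ∈ K n, ε ≤ f (n, k) := by
    intro n hn k hk
    have hkN := (hKsub n (Finset.mem_Icc.mp hn).2 k hk).1
    have hq : (n, k) ∈ Q := by
      rw [hQ, Finset.mem_filter, Finset.mem_product]
      exact ⟨⟨hn, Finset.mem_range.mpr (by omega)⟩, hk⟩
    exact le_trans (le_trans (min_le_right _ _) (min_le_right _ _)) (hεl_le _ hq)
  -- the α-shift
  set δ : ℝ := if 0 ∈ K m then g m 0 * v₀ * ε / S else 0 with hδ
  have hδ_nonneg : 0 ≤ δ := by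
    rw [hδ]
    split
    · next h0 =>
        exact div_nonneg (mul_nonneg (mul_nonneg (hg m 0 h0).le hv₀.le) hε_pos.le) hS_nonneg
    · exact le_refl 0
  have hSδ : S * δ = (if 0 ∈ K m then g m 0 * v₀ else 0) * ε := by
    rw [hδ]
    by_cases h0 : 0 ∈ K m
    · rw [if_pos h0, if_pos h0]
      field_simp
      exact mul_div_cancel_left₀ _ (ne_of_gt (hS_pos h0))
    · rw [if_neg h0, if_neg h0]; ring
  -- the perturbed point
  set v' := Function.update v m (v m + ε) with hv'
  set α' := Function.update α m (α m + δ) with hα'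
  have hv'm : v' m = v m + ε := Function.update_self m _ v
  have hv'ne : ∀ j, j ≠ m → v' j = v j := fun j hj => Function.update_of_ne hj _ v
  have hα'm : α' m = α m + δ := Function.update_self m _ α
  have hα'ne : ∀ j, j ≠ m → α' j = α j := fun j hj => Function.update_of_ne hj _ α
  have hvdiff : ∀ j, |v' j - v j| ≤ ε := by
    intro j
    by_cases hj : j = m
    · subst hj; rw [hv'm]; simp [abs_of_nonneg hε_pos.le]
    · rw [hv'ne j hj]; simp [hε_pos.le]
  have hα'ge : ∀ j, α j ≤ α' j := by
    intro j
    by_cases hj : j = m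
    · subst hj; rw [hα'm]; linarith
    · rw [hα'ne j hj]
  have hα_nonneg : ∀ j ∈ Finset.Icc 1 N, 0 ≤ α j := fun j hj =>
    le_trans (sq_nonneg (v j)) (hvα j hj)
  -- feasibility of the perturbed point
  have hfeas' : P1Feasible N K g v₀ vmin vmax imax p α' β v' := by
    refine ⟨?_, ⟨?_, ?_⟩, ?_, ?_, ?_⟩
    · rw [hv'ne 0 (Ne.symm hm0)]; exact hv0
    · -- voltage bounds
      intro n hn
      by_cases hnm : n = m
      · subst hnm
        rw [hv'm]
        constructor
        · linarith [(hsec.1 n hn).1]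
        · linarith
      · rw [hv'ne n hnm]; exact hsec.1 n hn
    · -- line constraints
      intro n hn k hk
      have hgnk := hg n k hk
      have hsl := hsec.2 n hn k hk
      have hεf := hεline n hn k hk
      rw [hf] at hεf
      simp only at hεf
      have hεf' : ε * (4 * g n k) ≤ imax n k - |g n k * (v n - v k)| := by
        rw [le_div_iff₀ (by linarith)] at hεf
        exact hεf
      have key : |g n k * (v' n - v' k)| ≤
          |g n k * (v n - v k)| + g n k * (|v' n - v n| + |v' k - v k|) := by
        have heq : g n k * (v' n - v' k)
            = g n k * (v n - v k) + (g n k * (v' n - v n) - g n k * (v' k - v k)) := by ring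
        rw [heq]
        refine (abs_add_le _ _).trans ?_
        have h1 : |g n k * (v' n - v n) - g n k * (v' k - v k)|
            ≤ |g n k * (v' n - v n)| + |g n k * (v' k - v k)| := abs_sub _ _
        rw [abs_mul, abs_mul, abs_of_pos hgnk] at h1
        linarith
      have hvd_n := hvdiff n
      have hvd_k := hvdiff k
      nlinarith [mul_le_mul_of_nonneg_left (add_le_add hvd_n hvd_k) hgnk.le]
    · -- balance
      intro n hn
      by_cases hnm : n = m
      · subst hnm
        rw [hα'm, hv'm]
        have hold := hbal n hn
        have : (∑ k ∈ K n, g n k) * (α n + δ) - ∑ k ∈ (K n).erase 0, g n k * β n k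
            = ((∑ k ∈ K n, g n k) * α n - ∑ k ∈ (K n).erase 0, g n k * β n k) + S * δ := by
          rw [hS]; ring
        rw [this, hold, hSδ]; ring
      · rw [hα'ne n hnm, hv'ne n hnm]; exact hbal n hn
    · -- v² ≤ α
      intro n hn
      by_cases hnm : n = m
      · subst hnm
        rw [hα'm, hv'm]
        have h2 : ε * (2 * v n + 1) ≤ α n - (v n) ^ 2 := by
          rw [le_div_iff₀ (by linarith)] at hεα
          exact hεα
        nlinarith [sq_nonneg ε]
      · rw [hα'ne n hnm, hv'ne n hnm]; exact hvα n hn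
    · -- β constraints
      intro n hn k hk
      have hk' := Finset.mem_of_mem_erase hk
      have hk0 : k ≠ 0 := Finset.ne_of_mem_erase hk
      have hkN := (hKsub n (Finset.mem_Icc.mp hn).2 k hk').1
      have hkI : k ∈ Finset.Icc 1 N := Finset.mem_Icc.mpr ⟨by omega, hkN⟩
      refine ⟨(hβ n hn k hk).1, le_trans (hβ n hn k hk).2 ?_⟩
      exact mul_le_mul (hα'ge n) (hα'ge k) (hα_nonneg k hkI) (le_trans (hα_nonneg n hn) (hα'ge n))
  -- contradiction with optimality
  have hle := hopt_max α' β v' hfeas'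
  have hsum : ∑ n ∈ Finset.Icc 1 N, v' n = (∑ n ∈ Finset.Icc 1 N, v n) + ε := by
    rw [hv', Finset.sum_update_of_mem hm]
    have := Finset.sum_eq_sum_sdiff_singleton_add hm v
    linarith
  rw [hsum] at hle
  linarith
end

section
/- Assume 2·v^min > v^max > v₀ > v^min. Then every optimizer (α*, β*, v*) of P1 satisfies β_{nk}* = v_n* · v_k* for all n ∈ {1, …, N} and all k ∈ K(n)\{0}, and consequently (β_{nk}*)² = α_n* α_k* for all such n, k. -/
/-- If the constraint `v n₀ ^ 2 ≤ α n₀` has strict slack at a feasible point,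
then there is a feasible point with strictly larger objective. -/
lemma P1_bump
    (N : ℕ)
    (K : ℕ → Finset ℕ)
    (hKsub : ∀ n, n ≤ N → ∀ k ∈ K n, k ≤ N ∧ k ≠ n)
    (hKsymm : ∀ n, n ≤ N → ∀ k, k ≤ N → (k ∈ K n ↔ n ∈ K k))
    (g : ℕ → ℕ → ℝ)
    (hg : ∀ n k, k ∈ K n → 0 < g n k)
    (v₀ vmin vmax : ℝ) (hv₀ : 0 < v₀) (hvmin : 0 < vmin)
    (imax : ℕ → ℕ → ℝ) (p : ℕ → ℝ)
    (α : ℕ → ℝ) (β : ℕ → ℕ → ℝ) (v : ℕ → ℝ)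
    (hfeas : P1Feasible N K g v₀ vmin vmax imax p α β v)
    (n₀ : ℕ) (hn₀Icc : n₀ ∈ Finset.Icc 1 N)
    (hslack : (v n₀) ^ 2 < α n₀) :
    ∃ α' β' v', P1Feasible N K g v₀ vmin vmax imax p α' β' v' ∧
      ∑ n ∈ Finset.Icc 1 N, v n < ∑ n ∈ Finset.Icc 1 N, v' n := by
  obtain ⟨hv0, ⟨hsec1, hsec2⟩, heq, hvα, hβ⟩ := hfeas
  have hn₀1 : 1 ≤ n₀ := (Finset.mem_Icc.mp hn₀Icc).1
  have hn₀N : n₀ ≤ N := (Finset.mem_Icc.mp hn₀Icc).2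
  have hvn₀ := hsec1 n₀ hn₀Icc
  have hvn₀pos : 0 < v n₀ := lt_trans hvmin hvn₀.1
  -- the bound set
  set B : Finset ℝ := insert 1 (insert (vmax - v n₀)
      (insert ((α n₀ - (v n₀) ^ 2) / (2 * v n₀ + 1))
      (((K n₀).image fun k => (imax n₀ k - |g n₀ k * (v n₀ - v k)|) / g n₀ k) ∪
       (((K n₀).filter fun m => 1 ≤ m).image
          fun m => (imax m n₀ - |g m n₀ * (v m - v n₀)|) / g m n₀)))) with hB
  have hBne : B.Nonempty := ⟨1, by simp [hB]⟩
  have hpos : ∀ b ∈ B, 0 < b := by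
    intro b hb
    simp only [hB, Finset.mem_insert, Finset.mem_union, Finset.mem_image,
      Finset.mem_filter] at hb
    rcases hb with rfl | rfl | rfl | ⟨k, hk, rfl⟩ | ⟨m, ⟨hm, hm1⟩, rfl⟩
    · norm_num
    · linarith [hvn₀.2]
    · apply div_pos (by linarith) (by linarith)
    · exact div_pos (by linarith [hsec2 n₀ hn₀Icc k hk]) (hg n₀ k hk)
    · have hmN : m ≤ N := (hKsub n₀ hn₀N m hm).1
      have hmIcc : m ∈ Finset.Icc 1 N := Finset.mem_Icc.mpr ⟨hm1, hmN⟩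
      have hn₀m : n₀ ∈ K m := (hKsymm n₀ hn₀N m hmN).mp hm
      exact div_pos (by linarith [hsec2 m hmIcc n₀ hn₀m]) (hg m n₀ hn₀m)
  have hminpos : 0 < B.min' hBne := hpos _ (B.min'_mem hBne)
  set ε : ℝ := B.min' hBne / 2 with hεdef
  have hε0 : 0 < ε := by positivity
  have hεlt : ∀ b ∈ B, ε < b := by
    intro b hb
    calc ε < B.min' hBne := by rw [hεdef]; linarith
    _ ≤ b := Finset.min'_le B b hb
  have hε1 : ε < 1 := hεlt 1 (by simp [hB])
  have hεmax : ε < vmax - v n₀ := hεlt _ (by simp [hB])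
  have hεslack : ε < (α n₀ - (v n₀) ^ 2) / (2 * v n₀ + 1) := hεlt _ (by simp [hB])
  have hεi1 : ∀ k ∈ K n₀, g n₀ k * ε < imax n₀ k - |g n₀ k * (v n₀ - v k)| := by
    intro k hk
    have h := hεlt _ (by
      simp only [hB, Finset.mem_insert, Finset.mem_union, Finset.mem_image]
      exact Or.inr (Or.inr (Or.inr (Or.inl ⟨k, hk, rfl⟩))))
    have hgk := hg n₀ k hk
    calc g n₀ k * ε < g n₀ k * ((imax n₀ k - |g n₀ k * (v n₀ - v k)|) / g n₀ k) :=
          (mul_lt_mul_iff_right₀ hgk).mpr h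
    _ = imax n₀ k - |g n₀ k * (v n₀ - v k)| := by field_simp
  have hεi2 : ∀ m ∈ K n₀, 1 ≤ m → g m n₀ * ε < imax m n₀ - |g m n₀ * (v m - v n₀)| := by
    intro m hm hm1
    have hmN : m ≤ N := (hKsub n₀ hn₀N m hm).1
    have hn₀m : n₀ ∈ K m := (hKsymm n₀ hn₀N m hmN).mp hm
    have h := hεlt _ (by
      simp only [hB, Finset.mem_insert, Finset.mem_union, Finset.mem_image,
        Finset.mem_filter]
      exact Or.inr (Or.inr (Or.inr (Or.inr ⟨m, ⟨hm, hm1⟩, rfl⟩))))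
    have hgk := hg m n₀ hn₀m
    calc g m n₀ * ε < g m n₀ * ((imax m n₀ - |g m n₀ * (v m - v n₀)|) / g m n₀) :=
          (mul_lt_mul_iff_right₀ hgk).mpr h
    _ = imax m n₀ - |g m n₀ * (v m - v n₀)| := by field_simp
  -- the new point
  set S : ℝ := ∑ k ∈ K n₀, g n₀ k with hSdef
  set δ : ℝ := if 0 ∈ K n₀ then g n₀ 0 * v₀ * ε / S else 0 with hδdef
  have hδ0 : 0 ≤ δ := by
    rw [hδdef]
    split_ifs with h0
    · have hS : 0 < S := Finset.sum_pos (fun k hk => hg n₀ k hk) ⟨0, h0⟩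
      have := hg n₀ 0 h0
      positivity
    · exact le_refl 0
  set α' : ℕ → ℝ := Function.update α n₀ (α n₀ + δ) with hα'
  set v' : ℕ → ℝ := Function.update v n₀ (v n₀ + ε) with hv'
  have hα'ge : ∀ m, α m ≤ α' m := by
    intro m
    by_cases h : m = n₀
    · rw [h, hα', Function.update_self]; linarith
    · rw [hα', Function.update_of_ne h]
  refine ⟨α', β, v', ⟨?_, ⟨?_, ?_⟩, ?_, ?_, ?_⟩, ?_⟩
  · -- v' 0 = v₀
    rw [hv', Function.update_of_ne (by omega) , hv0]
  · -- security part 1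
    intro n hn
    by_cases h : n = n₀
    · rw [h, hv', Function.update_self]
      exact ⟨by linarith [hvn₀.1], by linarith⟩
    · rw [hv', Function.update_of_ne h]
      exact hsec1 n hn
  · -- security part 2
    intro n hn k hk
    have hnN : n ≤ N := (Finset.mem_Icc.mp hn).2
    have hn1 : 1 ≤ n := (Finset.mem_Icc.mp hn).1
    have hkn : k ≠ n := (hKsub n hnN k hk).2
    by_cases h : n = n₀
    · subst h
      have hkne : k ≠ n := hkn
      rw [hv', Function.update_self, Function.update_of_ne (fun hh => hkne hh)]
      have h1 : g n k * (v n + ε - v k) = g n k * (v n - v k) + g n k * ε := by ring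
      have h2 := hεi1 k hk
      have hgk := hg n k hk
      calc |g n k * (v n + ε - v k)|
          ≤ |g n k * (v n - v k)| + |g n k * ε| := by rw [h1]; exact abs_add_le _ _
      _ = |g n k * (v n - v k)| + g n k * ε := by
          rw [abs_of_pos (mul_pos hgk hε0)]
      _ < imax n k := by linarith
    · rw [hv', Function.update_of_ne h]
      by_cases hkn₀ : k = n₀
      · subst hkn₀
        rw [Function.update_self]
        have hnK : n ∈ K k := by
          have hkN : k ≤ N := (hKsub n hnN _ hk).1
          exact (hKsymm n hnN k hkN).mp hk
        have h2 := hεi2 n hnK hn1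
        have hgk := hg n k hk
        have h1 : g n k * (v n - (v k + ε)) = g n k * (v n - v k) - g n k * ε := by ring
        calc |g n k * (v n - (v k + ε))|
            ≤ |g n k * (v n - v k)| + |g n k * ε| := by rw [h1]; exact abs_sub _ _
        _ = |g n k * (v n - v k)| + g n k * ε := by
            rw [abs_of_pos (mul_pos hgk hε0)]
        _ < imax n k := by linarith
      · rw [Function.update_of_ne hkn₀]
        exact hsec2 n hn k hk
  · -- power balance
    intro n hn
    by_cases h : n = n₀
    · subst h
      rw [hα', hv', Function.update_self, Function.update_self, ← hSdef]
      have h0 := heq n hn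
      rw [← hSdef] at h0
      by_cases h0K : 0 ∈ K n
      · have hS : 0 < S := by
          rw [hSdef]; exact Finset.sum_pos (fun k hk => hg n k hk) ⟨0, h0K⟩
        rw [hδdef]
        simp only [if_pos h0K] at h0 ⊢
        have hcancel : S * (g n 0 * v₀ * ε / S) = g n 0 * v₀ * ε := by
          field_simp
        nlinarith [hcancel]
      · rw [hδdef]
        simp only [if_neg h0K] at h0 ⊢
        nlinarith
    · rw [hα', hv', Function.update_of_ne h, Function.update_of_ne h]
      exact heq n hn
  · -- v'^2 ≤ α'
    intro n hn
    by_cases h : n = n₀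
    · subst h
      rw [hα', hv', Function.update_self, Function.update_self]
      have hd : (0:ℝ) < 2 * v n + 1 := by linarith
      have h1 : (2 * v n + 1) * ε < α n - (v n) ^ 2 := by
        rw [lt_div_iff₀ hd] at hεslack
        linarith
      nlinarith [mul_pos hε0 (sub_pos.mpr hε1)]
    · rw [hα', hv', Function.update_of_ne h, Function.update_of_ne h]
      exact hvα n hn
  · -- β constraints
    intro n hn k hk
    refine ⟨(hβ n hn k hk).1, ?_⟩
    have hk0 : k ≠ 0 := Finset.ne_of_mem_erase hk
    have hkK : k ∈ K n := Finset.mem_of_mem_erase hk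
    have hkN : k ≤ N := (hKsub n (Finset.mem_Icc.mp hn).2 k hkK).1
    have hkIcc : k ∈ Finset.Icc 1 N := Finset.mem_Icc.mpr ⟨Nat.one_le_iff_ne_zero.mpr hk0, hkN⟩
    have hαn : 0 ≤ α n := le_trans (sq_nonneg _) (hvα n hn)
    have hαk : 0 ≤ α k := le_trans (sq_nonneg _) (hvα k hkIcc)
    calc (β n k) ^ 2 ≤ α n * α k := (hβ n hn k hk).2
    _ ≤ α' n * α' k := mul_le_mul (hα'ge n) (hα'ge k) hαk (by linarith [hα'ge n])
  · -- objective strictly increases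
    rw [hv', Finset.sum_update_of_mem hn₀Icc]
    have : ∑ n ∈ Finset.Icc 1 N, v n
        = v n₀ + ∑ n ∈ Finset.Icc 1 N \ {n₀}, v n := by
      rw [Finset.sum_eq_add_sum_sdiff_singleton_of_mem hn₀Icc]
    linarith

/-- Assume `2 vmin > vmax > v₀ > vmin`. Then every optimizer `(α⋆, β⋆, v⋆)` of `P1`
satisfies `β⋆ n k = v⋆ n * v⋆ k` for all `n ∈ {1,…,N}` and `k ∈ K(n)\{0}`, and consequently
`(β⋆ n k)² = α⋆ n * α⋆ k` for all such `n`, `k`. -/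
theorem P1_optimizer_beta_tight
    (N : ℕ) (hN : 1 ≤ N)
    (K : ℕ → Finset ℕ)
    (hKsub : ∀ n, n ≤ N → ∀ k ∈ K n, k ≤ N ∧ k ≠ n)
    (hKsymm : ∀ n, n ≤ N → ∀ k, k ≤ N → (k ∈ K n ↔ n ∈ K k))
    (g : ℕ → ℕ → ℝ)
    (hg : ∀ n k, k ∈ K n → 0 < g n k)
    (hgsymm : ∀ n k, g n k = g k n)
    (v₀ vmin vmax : ℝ) (hv₀ : 0 < v₀) (hvmin : 0 < vmin) (hvmax : 0 < vmax)
    (imax : ℕ → ℕ → ℝ)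
    (himax : ∀ n ∈ Finset.Icc 1 N, ∀ k ∈ K n, 0 < imax n k)
    (p : ℕ → ℝ)
    (hord₁ : vmax < 2 * vmin) (hord₂ : v₀ < vmax) (hord₃ : vmin < v₀)
    -- `(α⋆, β⋆, v⋆)` is an optimizer of `P1`
    (α : ℕ → ℝ) (β : ℕ → ℕ → ℝ) (v : ℕ → ℝ)
    (hopt_feas : P1Feasible N K g v₀ vmin vmax imax p α β v)
    (hopt_max : ∀ α' β' v', P1Feasible N K g v₀ vmin vmax imax p α' β' v' →
      ∑ n ∈ Finset.Icc 1 N, v' n ≤ ∑ n ∈ Finset.Icc 1 N, v n) :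
    (∀ n ∈ Finset.Icc 1 N, ∀ k ∈ (K n).erase 0, β n k = v n * v k) ∧
    (∀ n ∈ Finset.Icc 1 N, ∀ k ∈ (K n).erase 0, (β n k) ^ 2 = α n * α k) := by
  obtain ⟨hv0, ⟨hsec1, hsec2⟩, heq, hvα, hβ⟩ := hopt_feas
  have hfeas : P1Feasible N K g v₀ vmin vmax imax p α β v :=
    ⟨hv0, ⟨hsec1, hsec2⟩, heq, hvα, hβ⟩
  -- Step 1: α n = v n ^ 2 for every PQ bus.
  have halpha : ∀ n ∈ Finset.Icc 1 N, α n = (v n) ^ 2 := by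
    intro n hn
    by_contra h
    have hlt : (v n) ^ 2 < α n := lt_of_le_of_ne (hvα n hn) (fun e => h e.symm)
    obtain ⟨α', β', v', hf', hlt'⟩ :=
      P1_bump N K hKsub hKsymm g hg v₀ vmin vmax hv₀ hvmin imax p α β v hfeas n hn hlt
    exact absurd (hopt_max α' β' v' hf') (not_le.mpr hlt')
  -- Step 2: β n k = v n * v k.
  have hmain : ∀ n ∈ Finset.Icc 1 N, ∀ k ∈ (K n).erase 0, β n k = v n * v k := by
    intro n hn k hk
    have hk0 : k ≠ 0 := Finset.ne_of_mem_erase hk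
    have hkK : k ∈ K n := Finset.mem_of_mem_erase hk
    have hnN : n ≤ N := (Finset.mem_Icc.mp hn).2
    have hkN : k ≤ N := (hKsub n hnN k hkK).1
    have hkIcc : k ∈ Finset.Icc 1 N := Finset.mem_Icc.mpr ⟨Nat.one_le_iff_ne_zero.mpr hk0, hkN⟩
    have hvn : 0 < v n := lt_trans hvmin (hsec1 n hn).1
    have hvk : 0 < v k := lt_trans hvmin (hsec1 k hkIcc).1
    have hβ2 : (β n k) ^ 2 ≤ (v n * v k) ^ 2 := by
      have := (hβ n hn k hk).2
      rw [halpha n hn, halpha k hkIcc] at this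
      nlinarith [this]
    have hβ0 : 0 ≤ β n k := (hβ n hn k hk).1
    have hle : β n k ≤ v n * v k := by nlinarith [mul_pos hvn hvk]
    rcases eq_or_lt_of_le hle with heqq | hlt
    · exact heqq
    -- strict slack: build an intermediate feasible point with slack in `v n ^ 2 ≤ α n`.
    exfalso
    set η : ℝ := v n * v k - β n k with hη
    have hη0 : 0 < η := by rw [hη]; linarith
    set S : ℝ := ∑ j ∈ K n, g n j with hSdef
    have hS : 0 < S := Finset.sum_pos (fun j hj => hg n j hj) ⟨k, hkK⟩
    set Δ : ℝ := g n k * η / S with hΔ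
    have hΔ0 : 0 < Δ := by
      have := hg n k hkK
      rw [hΔ]; positivity
    set α'' : ℕ → ℝ := Function.update α n (α n + Δ) with hα''
    set β'' : ℕ → ℕ → ℝ :=
      Function.update β n (Function.update (β n) k (v n * v k)) with hβ''
    have hα''ge : ∀ m, α m ≤ α'' m := by
      intro m
      by_cases h : m = n
      · rw [h, hα'', Function.update_self]; linarith
      · rw [hα'', Function.update_of_ne h]
    have hβ''eq : ∀ m j, m ≠ n → β'' m j = β m j := by
      intro m j hm
      rw [hβ'', Function.update_of_ne hm]
    have hfeas'' : P1Feasible N K g v₀ vmin vmax imax p α'' β'' v := by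
      refine ⟨hv0, ⟨hsec1, hsec2⟩, ?_, ?_, ?_⟩
      · -- power balance
        intro m hm
        by_cases h : m = n
        · subst h
          rw [hα'', hβ'', Function.update_self, Function.update_self, ← hSdef]
          have hsum : ∑ j ∈ (K m).erase 0, g m j * Function.update (β m) k (v m * v k) j
              = (∑ j ∈ (K m).erase 0, g m j * β m j) + g m k * η := by
            have hstep : ∀ j ∈ (K m).erase 0,
                g m j * Function.update (β m) k (v m * v k) j
                  = g m j * β m j + (if j = k then g m j * η else 0) := by
              intro j hj
              by_cases hjk : j = k
              · subst hjk
                rw [Function.update_self, hη]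
                ring_nf
                simp
              · rw [Function.update_of_ne hjk, if_neg hjk]
                ring
            rw [Finset.sum_congr rfl hstep, Finset.sum_add_distrib]
            congr 1
            rw [Finset.sum_ite_eq' ((K m).erase 0) k (fun j => g m j * η), if_pos hk]
          rw [hsum]
          have h0 := heq m hm
          rw [← hSdef] at h0
          have hcancel : S * Δ = g m k * η := by
            rw [hΔ]; field_simp
          nlinarith [hcancel]
        · rw [hα'', Function.update_of_ne h]
          have : ∑ j ∈ (K m).erase 0, g m j * β'' m j
              = ∑ j ∈ (K m).erase 0, g m j * β m j :=
            Finset.sum_congr rfl fun j _ => by rw [hβ''eq m j h]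
          rw [this]
          exact heq m hm
      · -- v^2 ≤ α''
        intro m hm
        exact le_trans (hvα m hm) (hα''ge m)
      · -- β'' constraints
        intro m hm j hj
        have hj0 : j ≠ 0 := Finset.ne_of_mem_erase hj
        have hjK : j ∈ K m := Finset.mem_of_mem_erase hj
        have hjN : j ≤ N := (hKsub m (Finset.mem_Icc.mp hm).2 j hjK).1
        have hjIcc : j ∈ Finset.Icc 1 N :=
          Finset.mem_Icc.mpr ⟨Nat.one_le_iff_ne_zero.mpr hj0, hjN⟩
        have hαm0 : 0 ≤ α m := le_trans (sq_nonneg _) (hvα m hm)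
        have hαj0 : 0 ≤ α j := le_trans (sq_nonneg _) (hvα j hjIcc)
        have hbase : 0 ≤ β'' m j ∧ (β'' m j) ^ 2 ≤ α m * α j := by
          by_cases h : m = n
          · subst h
            by_cases hjk : j = k
            · subst hjk
              rw [hβ'', Function.update_self, Function.update_self]
              constructor
              · positivity
              · rw [halpha m hm, halpha j hjIcc]
                nlinarith
            · rw [hβ'', Function.update_self, Function.update_of_ne hjk]
              exact hβ m hm j hj
          · rw [hβ''eq m j h]
            exact hβ m hm j hj
        refine ⟨hbase.1, le_trans hbase.2 ?_⟩
        exact mul_le_mul (hα''ge m) (hα''ge j) hαj0 (by linarith [hα''ge m])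
    -- slack at bus n for the intermediate point
    have hslack'' : (v n) ^ 2 < α'' n := by
      rw [hα'', Function.update_self, halpha n hn]
      linarith
    obtain ⟨α₃, β₃, v₃, hf₃, hlt₃⟩ :=
      P1_bump N K hKsub hKsymm g hg v₀ vmin vmax hv₀ hvmin imax p α'' β'' v hfeas'' n hn hslack''
    exact absurd (hopt_max α₃ β₃ v₃ hf₃) (not_le.mpr hlt₃)
  refine ⟨hmain, ?_⟩
  intro n hn k hk
  have hk0 : k ≠ 0 := Finset.ne_of_mem_erase hk
  have hkK : k ∈ K n := Finset.mem_of_mem_erase hk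
  have hnN : n ≤ N := (Finset.mem_Icc.mp hn).2
  have hkN : k ≤ N := (hKsub n hnN k hkK).1
  have hkIcc : k ∈ Finset.Icc 1 N := Finset.mem_Icc.mpr ⟨Nat.one_le_iff_ne_zero.mpr hk0, hkN⟩
  rw [hmain n hn k hk, halpha n hn, halpha k hkIcc]
  ring
end

section
/- Assume 2·v^min > v^max > v₀ > v^min. Consider the relaxed problem P1', defined like P1 but with the non-strict security constraints v^min ≤ v_n ≤ v^max and |g_{nk}(v_n − v_k)| ≤ i_{nk}^max in place of the strict ones. If (α*, β*, v*) is an optimizer of P1' and v* additionally satisfies the strict security constraints, then (v₁*, …, v_N*) satisfies the load-flow equations together with the strict security constraints. -/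
/-- The non-strict security constraints. -/
def SecurityNonStrict (N : ℕ) (K : ℕ → Finset ℕ) (g : ℕ → ℕ → ℝ)
    (vmin vmax : ℝ) (imax : ℕ → ℕ → ℝ) (v : ℕ → ℝ) : Prop :=
  (∀ n ∈ Finset.Icc 1 N, vmin ≤ v n ∧ v n ≤ vmax) ∧
  (∀ n ∈ Finset.Icc 1 N, ∀ k ∈ K n, |g n k * (v n - v k)| ≤ imax n k)

/-- Feasibility of a point `(α, β, v)` for the relaxed optimization `P1'`, which is `P1`
with the non-strict security constraints in place of the strict ones. -/
def P1'Feasible (N : ℕ) (K : ℕ → Finset ℕ) (g : ℕ → ℕ → ℝ) (v₀ vmin vmax : ℝ)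
    (imax : ℕ → ℕ → ℝ) (p : ℕ → ℝ)
    (α : ℕ → ℝ) (β : ℕ → ℕ → ℝ) (v : ℕ → ℝ) : Prop :=
  v 0 = v₀ ∧
  SecurityNonStrict N K g vmin vmax imax v ∧
  (∀ n ∈ Finset.Icc 1 N,
    (∑ k ∈ K n, g n k) * α n - ∑ k ∈ (K n).erase 0, g n k * β n k
      = p n + (if 0 ∈ K n then g n 0 * v₀ else 0) * v n) ∧
  (∀ n ∈ Finset.Icc 1 N, (v n) ^ 2 ≤ α n) ∧
  (∀ n ∈ Finset.Icc 1 N, ∀ k ∈ (K n).erase 0, 0 ≤ β n k ∧ (β n k) ^ 2 ≤ α n * α k)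

lemma sum_update_gt (N : ℕ) (v : ℕ → ℝ) (m : ℕ) (hm : m ∈ Finset.Icc 1 N)
    (ε : ℝ) (hε : 0 < ε) :
    ∑ n ∈ Finset.Icc 1 N, v n < ∑ n ∈ Finset.Icc 1 N, Function.update v m (v m + ε) n := by
  rw [Finset.sum_update_of_mem hm, Finset.sdiff_singleton_eq_erase,
    ← Finset.add_sum_erase _ v hm]
  linarith

lemma exact_alpha
    (N : ℕ) (K : ℕ → Finset ℕ)
    (hKsub : ∀ n, n ≤ N → ∀ k ∈ K n, k ≤ N ∧ k ≠ n)
    (g : ℕ → ℕ → ℝ) (hg : ∀ n k, k ∈ K n → 0 < g n k)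
    (v₀ vmin vmax : ℝ) (hv₀ : 0 < v₀) (hvmin : 0 < vmin)
    (imax : ℕ → ℕ → ℝ) (p : ℕ → ℝ)
    (α : ℕ → ℝ) (β : ℕ → ℕ → ℝ) (v : ℕ → ℝ)
    (hfeas : P1'Feasible N K g v₀ vmin vmax imax p α β v)
    (hopt : ∀ α' β' v', P1'Feasible N K g v₀ vmin vmax imax p α' β' v' →
      ∑ n ∈ Finset.Icc 1 N, v' n ≤ ∑ n ∈ Finset.Icc 1 N, v n)
    (hstrict : SecurityStrict N K g vmin vmax imax v) :
    ∀ m ∈ Finset.Icc 1 N, α m = v m ^ 2 := by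
  intro m hm
  obtain ⟨hv0, ⟨hvbox, _hline⟩, heq, hα, hβ⟩ := hfeas
  obtain ⟨hsbox, hsline⟩ := hstrict
  by_contra hne
  have hαm : v m ^ 2 < α m := lt_of_le_of_ne (hα m hm) fun h => hne h.symm
  have hvm_pos : 0 < v m := lt_trans hvmin (hsbox m hm).1
  have hαm_pos : 0 < α m := lt_of_le_of_lt (sq_nonneg _) hαm
  have hsqrt : v m < Real.sqrt (α m) := by
    rw [show v m = Real.sqrt (v m ^ 2) by rw [Real.sqrt_sq hvm_pos.le]]
    exact Real.sqrt_lt_sqrt (sq_nonneg _) hαm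
  set T : Finset (ℕ × ℕ) := (Finset.Icc 1 N ×ˢ Finset.Icc 0 N).filter
      (fun q => q.2 ∈ K q.1 ∧ (q.1 = m ∨ q.2 = m)) with hT
  set slack : ℕ × ℕ → ℝ :=
    fun q => (imax q.1 q.2 - |g q.1 q.2 * (v q.1 - v q.2)|) / g q.1 q.2 with hslack
  set S : Finset ℝ :=
    insert (vmax - v m) (insert (Real.sqrt (α m) - v m) (T.image slack)) with hS
  have hSne : S.Nonempty := ⟨_, Finset.mem_insert_self _ _⟩
  set ε := S.min' hSne with hεdef
  have hεpos : 0 < ε := by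
    have hall : ∀ x ∈ S, 0 < x := by
      intro x hx
      simp only [hS, Finset.mem_insert, Finset.mem_image] at hx
      rcases hx with rfl | rfl | ⟨q, hq, rfl⟩
      · linarith [(hsbox m hm).2]
      · linarith
      · simp only [hT, Finset.mem_filter, Finset.mem_product] at hq
        obtain ⟨⟨hq1, _⟩, hq2, _⟩ := hq
        exact div_pos (by linarith [hsline q.1 hq1 q.2 hq2]) (hg _ _ hq2)
    exact hall ε (S.min'_mem hSne)
  have hε1 : ε ≤ vmax - v m := Finset.min'_le _ _ (by simp [hS])
  have hε2 : ε ≤ Real.sqrt (α m) - v m := Finset.min'_le _ _ (by simp [hS])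
  have hε3 : ∀ n ∈ Finset.Icc 1 N, ∀ k ∈ K n, (n = m ∨ k = m) →
      |g n k * (v n - v k)| + g n k * ε ≤ imax n k := by
    intro n hn k hk hor
    have hkN : k ≤ N := (hKsub n (Finset.mem_Icc.mp hn).2 k hk).1
    have hqT : (n, k) ∈ T := by
      simp only [hT, Finset.mem_filter, Finset.mem_product]
      exact ⟨⟨hn, Finset.mem_Icc.mpr ⟨Nat.zero_le _, hkN⟩⟩, hk, hor⟩
    have hle : ε ≤ slack (n, k) := Finset.min'_le _ _ (by
      simp only [hS, Finset.mem_insert]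
      right; right; exact Finset.mem_image_of_mem _ hqT)
    have hgpos := hg n k hk
    rw [hslack, le_div_iff₀ hgpos] at hle
    nlinarith
  set c : ℝ := if 0 ∈ K m then g m 0 * v₀ else 0 with hc
  set G : ℝ := ∑ k ∈ K m, g m k with hG
  set t : ℝ := c * ε / G with ht
  have hGpos0 : 0 ∈ K m → 0 < G := fun h0 =>
    Finset.sum_pos (fun k hk => hg m k hk) ⟨0, h0⟩
  have hct : G * t = c * ε := by
    by_cases h0 : 0 ∈ K m
    · have := hGpos0 h0
      rw [ht]; field_simp
    · simp [ht, hc, h0]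
  have htnn : 0 ≤ t := by
    by_cases h0 : 0 ∈ K m
    · have hGpos := hGpos0 h0
      have hcpos : 0 ≤ c := by
        rw [hc, if_pos h0]; exact mul_nonneg (hg m 0 h0).le hv₀.le
      rw [ht]
      exact div_nonneg (mul_nonneg hcpos hεpos.le) hGpos.le
    · simp [ht, hc, h0]
  have hmN : m ≤ N := (Finset.mem_Icc.mp hm).2
  have hm0 : m ≠ 0 := by
    have := (Finset.mem_Icc.mp hm).1; omega
  set α' := Function.update α m (α m + t) with hα'
  set v' := Function.update v m (v m + ε) with hv'
  have hv'm : v' m = v m + ε := Function.update_self m _ v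
  have hα'm : α' m = α m + t := Function.update_self m _ α
  have hv'ne : ∀ n, n ≠ m → v' n = v n := fun n hn => Function.update_of_ne hn _ v
  have hα'ne : ∀ n, n ≠ m → α' n = α n := fun n hn => Function.update_of_ne hn _ α
  have hαnn : ∀ n ∈ Finset.Icc 1 N, 0 ≤ α n := fun n hn => le_trans (sq_nonneg _) (hα n hn)
  have hα'ge : ∀ n, α n ≤ α' n := by
    intro n
    by_cases h : n = m
    · subst h; rw [hα'm]; linarith
    · rw [hα'ne n h]
  have hkIcc : ∀ n, n ≤ N → ∀ k ∈ (K n).erase 0, k ∈ Finset.Icc 1 N := by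
    intro n hn k hk
    have h1 := Finset.ne_of_mem_erase hk
    have h2 := (hKsub n hn k (Finset.mem_of_mem_erase hk)).1
    exact Finset.mem_Icc.mpr ⟨Nat.one_le_iff_ne_zero.mpr h1, h2⟩
  have hfeas' : P1'Feasible N K g v₀ vmin vmax imax p α' β v' := by
    refine ⟨?_, ⟨?_, ?_⟩, ?_, ?_, ?_⟩
    · rw [hv'ne 0 (Ne.symm hm0), hv0]
    · intro n hn
      by_cases h : n = m
      · subst h
        rw [hv'm]
        constructor
        · linarith [(hsbox n hn).1]
        · linarith
      · rw [hv'ne n h]; exact hvbox n hn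
    · intro n hn k hk
      by_cases hnm : n = m
      · subst hnm
        have hkm : k ≠ n := (hKsub n hmN k hk).2
        rw [hv'm, hv'ne k hkm]
        have habs : |g n k * (v n + ε - v k)| ≤ |g n k * (v n - v k)| + g n k * ε := by
          have : g n k * (v n + ε - v k) = g n k * (v n - v k) + g n k * ε := by ring
          rw [this]
          calc |g n k * (v n - v k) + g n k * ε| ≤ |g n k * (v n - v k)| + |g n k * ε| :=
                abs_add_le _ _
            _ = |g n k * (v n - v k)| + g n k * ε := by
                rw [abs_of_nonneg (mul_nonneg (hg n k hk).le hεpos.le)]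
        exact le_trans habs (hε3 n hn k hk (Or.inl rfl))
      · by_cases hkm : k = m
        · subst hkm
          rw [hv'm, hv'ne n hnm]
          have habs : |g n k * (v n - (v k + ε))| ≤ |g n k * (v n - v k)| + g n k * ε := by
            have : g n k * (v n - (v k + ε)) = g n k * (v n - v k) + -(g n k * ε) := by ring
            rw [this]
            calc |g n k * (v n - v k) + -(g n k * ε)| ≤ |g n k * (v n - v k)| + |-(g n k * ε)| :=
                  abs_add_le _ _
              _ = |g n k * (v n - v k)| + g n k * ε := by
                  rw [abs_neg, abs_of_nonneg (mul_nonneg (hg n k hk).le hεpos.le)]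
          exact le_trans habs (hε3 n hn k hk (Or.inr rfl))
        · rw [hv'ne n hnm, hv'ne k hkm]
          exact (hsline n hn k hk).le
    · intro n hn
      by_cases h : n = m
      · subst h
        rw [hα'm, hv'm]
        have h1 := heq n hn
        have h2 : (∑ k ∈ K n, g n k) * (α n + t) = (∑ k ∈ K n, g n k) * α n + c * ε := by
          rw [mul_add, ← hG, hct]
        rw [← hG] at h1 ⊢
        rw [← hc] at h1 ⊢
        linarith
      · rw [hα'ne n h, hv'ne n h]
        exact heq n hn
    · intro n hn
      by_cases h : n = m
      · subst h
        rw [hα'm, hv'm]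
        have h1 : v n + ε ≤ Real.sqrt (α n) := by linarith
        have h2 : (v n + ε) ^ 2 ≤ Real.sqrt (α n) ^ 2 :=
          pow_le_pow_left₀ (by linarith) h1 2
        rw [Real.sq_sqrt hαm_pos.le] at h2
        linarith
      · rw [hα'ne n h, hv'ne n h]
        exact hα n hn
    · intro n hn k hk
      refine ⟨(hβ n hn k hk).1, ?_⟩
      have h2 := (hβ n hn k hk).2
      have hkI := hkIcc n (Finset.mem_Icc.mp hn).2 k hk
      calc β n k ^ 2 ≤ α n * α k := h2
        _ ≤ α' n * α' k :=
          mul_le_mul (hα'ge n) (hα'ge k) (hαnn k hkI) (le_trans (hαnn n hn) (hα'ge n))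
  have hle := hopt α' β v' hfeas'
  have hgt := sum_update_gt N v m hm ε hεpos
  rw [← hv'] at hgt
  linarith

lemma exact_beta
    (N : ℕ) (K : ℕ → Finset ℕ)
    (hKsub : ∀ n, n ≤ N → ∀ k ∈ K n, k ≤ N ∧ k ≠ n)
    (g : ℕ → ℕ → ℝ) (hg : ∀ n k, k ∈ K n → 0 < g n k)
    (v₀ vmin vmax : ℝ) (hv₀ : 0 < v₀) (hvmin : 0 < vmin)
    (imax : ℕ → ℕ → ℝ) (p : ℕ → ℝ)
    (α : ℕ → ℝ) (β : ℕ → ℕ → ℝ) (v : ℕ → ℝ)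
    (hfeas : P1'Feasible N K g v₀ vmin vmax imax p α β v)
    (hopt : ∀ α' β' v', P1'Feasible N K g v₀ vmin vmax imax p α' β' v' →
      ∑ n ∈ Finset.Icc 1 N, v' n ≤ ∑ n ∈ Finset.Icc 1 N, v n)
    (hstrict : SecurityStrict N K g vmin vmax imax v) :
    ∀ m ∈ Finset.Icc 1 N, ∀ k ∈ (K m).erase 0, β m k = v m * v k := by
  have hαex := exact_alpha N K hKsub g hg v₀ vmin vmax hv₀ hvmin imax p α β v
    hfeas hopt hstrict
  intro m hm k hk
  obtain ⟨hv0, hsec, heq, hα, hβ⟩ := hfeas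
  have hmN : m ≤ N := (Finset.mem_Icc.mp hm).2
  have hkK : k ∈ K m := Finset.mem_of_mem_erase hk
  have hk0 : k ≠ 0 := Finset.ne_of_mem_erase hk
  have hkm : k ≠ m := (hKsub m hmN k hkK).2
  have hkI : k ∈ Finset.Icc 1 N :=
    Finset.mem_Icc.mpr ⟨Nat.one_le_iff_ne_zero.mpr hk0, (hKsub m hmN k hkK).1⟩
  have hvm : 0 < v m := lt_trans hvmin (hstrict.1 m hm).1
  have hvk : 0 < v k := lt_trans hvmin (hstrict.1 k hkI).1
  have hβnn := (hβ m hm k hk).1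
  have hβsq := (hβ m hm k hk).2
  rw [hαex m hm, hαex k hkI] at hβsq
  have hβle : β m k ≤ v m * v k := by nlinarith [mul_pos hvm hvk, sq_nonneg (β m k - v m * v k), sq_nonneg (β m k + v m * v k)]
  by_contra hne
  have hlt : β m k < v m * v k := lt_of_le_of_ne hβle hne
  set d : ℝ := v m * v k - β m k with hd
  have hdpos : 0 < d := by rw [hd]; linarith
  set G : ℝ := ∑ j ∈ K m, g m j with hG
  have hGpos : 0 < G := Finset.sum_pos (fun j hj => hg m j hj) ⟨k, hkK⟩
  set t : ℝ := g m k * d / G with ht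
  have htpos : 0 < t := div_pos (mul_pos (hg m k hkK) hdpos) hGpos
  have hGt : G * t = g m k * d := by rw [ht]; field_simp
  set α' := Function.update α m (α m + t) with hα'
  set β' := Function.update β m (Function.update (β m) k (v m * v k)) with hβ'
  have hα'm : α' m = α m + t := Function.update_self m _ α
  have hα'ne : ∀ n, n ≠ m → α' n = α n := fun n hn => Function.update_of_ne hn _ α
  have hβ'ne : ∀ n, n ≠ m → β' n = β n := fun n hn => Function.update_of_ne hn _ β
  have hβ'mk : β' m k = v m * v k := by
    rw [hβ', Function.update_self]; exact Function.update_self k _ (β m)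
  have hβ'mne : ∀ j, j ≠ k → β' m j = β m j := by
    intro j hj
    rw [hβ', Function.update_self]; exact Function.update_of_ne hj _ (β m)
  have hαnn : ∀ n ∈ Finset.Icc 1 N, 0 ≤ α n := fun n hn => le_trans (sq_nonneg _) (hα n hn)
  have hα'ge : ∀ n, α n ≤ α' n := by
    intro n
    by_cases h : n = m
    · subst h; rw [hα'm]; linarith
    · rw [hα'ne n h]
  have hfeas' : P1'Feasible N K g v₀ vmin vmax imax p α' β' v := by
    refine ⟨hv0, hsec, ?_, ?_, ?_⟩
    · intro n hn
      by_cases h : n = m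
      · subst h
        have h1 := heq n hn
        have hsplit : ∑ j ∈ (K n).erase 0, g n j * β' n j
            = g n k * (v n * v k) + ∑ j ∈ ((K n).erase 0).erase k, g n j * β n j := by
          rw [← Finset.add_sum_erase _ (fun j => g n j * β' n j) hk, hβ'mk]
          congr 1
          refine Finset.sum_congr rfl fun j hj => ?_
          rw [hβ'mne j (Finset.ne_of_mem_erase hj)]
        have hsplit2 : ∑ j ∈ (K n).erase 0, g n j * β n j
            = g n k * β n k + ∑ j ∈ ((K n).erase 0).erase k, g n j * β n j := by
          rw [← Finset.add_sum_erase _ (fun j => g n j * β n j) hk]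
        rw [hα'm, hsplit, ← hG] at *
        rw [hsplit2, ← hG] at h1
        have : G * (α n + t) = G * α n + g n k * d := by rw [mul_add, hGt]
        rw [hd] at this
        linarith
      · rw [hα'ne n h, hβ'ne n h]
        exact heq n hn
    · intro n hn
      exact le_trans (hα n hn) (hα'ge n)
    · intro n hn j hj
      by_cases h : n = m
      · subst h
        by_cases hjk : j = k
        · subst hjk
          rw [hβ'mk, hα'm, hα'ne j hkm, hαex n hn, hαex j hkI]
          refine ⟨mul_nonneg hvm.le hvk.le, ?_⟩
          nlinarith [sq_nonneg (v j), htpos.le]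
        · rw [hβ'mne j hjk]
          refine ⟨(hβ n hn j hj).1, ?_⟩
          have hjI : j ∈ Finset.Icc 1 N :=
            Finset.mem_Icc.mpr ⟨Nat.one_le_iff_ne_zero.mpr (Finset.ne_of_mem_erase hj),
              (hKsub n hmN j (Finset.mem_of_mem_erase hj)).1⟩
          calc β n j ^ 2 ≤ α n * α j := (hβ n hn j hj).2
            _ ≤ α' n * α' j := mul_le_mul (hα'ge n) (hα'ge j) (hαnn j hjI)
                (le_trans (hαnn n hn) (hα'ge n))
      · rw [hβ'ne n h]
        refine ⟨(hβ n hn j hj).1, ?_⟩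
        have hjI : j ∈ Finset.Icc 1 N :=
          Finset.mem_Icc.mpr ⟨Nat.one_le_iff_ne_zero.mpr (Finset.ne_of_mem_erase hj),
            (hKsub n (Finset.mem_Icc.mp hn).2 j (Finset.mem_of_mem_erase hj)).1⟩
        calc β n j ^ 2 ≤ α n * α j := (hβ n hn j hj).2
          _ ≤ α' n * α' j := mul_le_mul (hα'ge n) (hα'ge j) (hαnn j hjI)
              (le_trans (hαnn n hn) (hα'ge n))
  have hcontra := exact_alpha N K hKsub g hg v₀ vmin vmax hv₀ hvmin imax p α' β' v
    hfeas' hopt hstrict m hm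
  rw [hα'm, hαex m hm] at hcontra
  linarith

/-- Assume `2 vmin > vmax > v₀ > vmin`.  If `(α⋆, β⋆, v⋆)` is an optimizer of the relaxed
problem `P1'` and `v⋆` additionally satisfies the strict security constraints, then
`(v⋆ 1, …, v⋆ N)` satisfies the load-flow equations together with the strict security
constraints. -/
theorem P1'_optimizer_strictly_secure_solves_load_flow
    (N : ℕ) (hN : 1 ≤ N)
    (K : ℕ → Finset ℕ)
    (hKsub : ∀ n, n ≤ N → ∀ k ∈ K n, k ≤ N ∧ k ≠ n)
    (hKsymm : ∀ n, n ≤ N → ∀ k, k ≤ N → (k ∈ K n ↔ n ∈ K k))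
    (g : ℕ → ℕ → ℝ)
    (hg : ∀ n k, k ∈ K n → 0 < g n k)
    (hgsymm : ∀ n k, g n k = g k n)
    (v₀ vmin vmax : ℝ) (hv₀ : 0 < v₀) (hvmin : 0 < vmin) (hvmax : 0 < vmax)
    (imax : ℕ → ℕ → ℝ)
    (himax : ∀ n ∈ Finset.Icc 1 N, ∀ k ∈ K n, 0 < imax n k)
    (p : ℕ → ℝ)
    (hord₁ : vmax < 2 * vmin) (hord₂ : v₀ < vmax) (hord₃ : vmin < v₀)
    -- `(α⋆, β⋆, v⋆)` is an optimizer of `P1'`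
    (α : ℕ → ℝ) (β : ℕ → ℕ → ℝ) (v : ℕ → ℝ)
    (hopt_feas : P1'Feasible N K g v₀ vmin vmax imax p α β v)
    (hopt_max : ∀ α' β' v', P1'Feasible N K g v₀ vmin vmax imax p α' β' v' →
      ∑ n ∈ Finset.Icc 1 N, v' n ≤ ∑ n ∈ Finset.Icc 1 N, v n)
    -- `v⋆` additionally satisfies the strict security constraints
    (hstrict : SecurityStrict N K g vmin vmax imax v) :
    LoadFlow N K g p v ∧ SecurityStrict N K g vmin vmax imax v := by
  have hαex := exact_alpha N K hKsub g hg v₀ vmin vmax hv₀ hvmin imax p α β v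
    hopt_feas hopt_max hstrict
  have hβex := exact_beta N K hKsub g hg v₀ vmin vmax hv₀ hvmin imax p α β v
    hopt_feas hopt_max hstrict
  obtain ⟨hv0, _, heq, _, _⟩ := hopt_feas
  refine ⟨?_, hstrict⟩
  intro n hn
  have h := heq n hn
  rw [hαex n hn] at h
  have hsum : ∑ k ∈ (K n).erase 0, g n k * β n k
      = (∑ k ∈ (K n).erase 0, g n k * v k) * v n := by
    rw [Finset.sum_mul]
    refine Finset.sum_congr rfl fun k hk => ?_
    rw [hβex n hn k hk]; ring
  rw [hsum] at h
  by_cases h0 : 0 ∈ K n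
  · rw [if_pos h0] at h
    have hsplit : ∑ k ∈ K n, g n k * v k
        = g n 0 * v 0 + ∑ k ∈ (K n).erase 0, g n k * v k :=
      (Finset.add_sum_erase _ (fun k => g n k * v k) h0).symm
    rw [hsplit, hv0]
    linear_combination h
  · rw [if_neg h0] at h
    rw [show (K n).erase 0 = K n from Finset.erase_eq_of_notMem h0] at h
    linear_combination h
end
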